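/- Let m be an odd prime. Then for every j ∈ A_m, the forward orbit {γ_m^{(p)}(j) : p ∈ ℕ} has exactly ord_m(2) elements, where ord_m(2) denotes the multiplicative order of 2 modulo m. Consequently, A_m consists of a single orbit of γ_m if and only if 2 is a primitive root modulo m, i.e. ord_m(2) = m − 1. -/
import Mathlib

def gammaMap (m j : ℤ) : ℤ :=
  if Even j then (m - 1 + j) / 2 else (j - 1) / 2

lemma gamma_two_mul {m : ℤ} (hm : Odd m) (j : ℤ) :
    2 * gammaMap m j = if Even j then m - 1 + j else j - 1 := by
  unfold gammaMap
  obtain ⟨t, ht⟩ := hm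
  split <;> rename_i h
  · obtain ⟨k, hk⟩ := h; omega
  · rw [Int.not_even_iff_odd] at h; obtain ⟨k, hk⟩ := h; omega

lemma gamma_mem {m j : ℤ} (hm : Odd m) (h3 : 3 ≤ m) (hj : j ∈ Set.Icc 0 (m - 2)) :
    gammaMap m j ∈ Set.Icc 0 (m - 2) := by
  obtain ⟨t, ht⟩ := hm
  simp only [Set.mem_Icc] at *
  unfold gammaMap
  split <;> rename_i h
  · obtain ⟨k, hk⟩ := h; omega
  · rw [Int.not_even_iff_odd] at h; obtain ⟨k, hk⟩ := h; omega

theorem stmt_6 (m : ℕ) (hm : Nat.Prime m) (hm' : Odd m) :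
    (∀ j ∈ Set.Icc (0 : ℤ) ((m : ℤ) - 2),
      ({x : ℤ | ∃ p : ℕ, (gammaMap (m : ℤ))^[p] j = x}).ncard = orderOf (2 : ZMod m)) ∧
    ((∀ j ∈ Set.Icc (0 : ℤ) ((m : ℤ) - 2),
        {x : ℤ | ∃ p : ℕ, (gammaMap (m : ℤ))^[p] j = x} = Set.Icc (0 : ℤ) ((m : ℤ) - 2)) ↔
      orderOf (2 : ZMod m) = m - 1) := by
  haveI : Fact (Nat.Prime m) := ⟨hm⟩
  have hm2 : 2 ≤ m := hm.two_le
  have hm3 : 3 ≤ m := by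
    rcases Nat.odd_iff.mp hm' with h; omega
  have hmz : Odd ((m : ℤ)) := by exact_mod_cast hm'
  have hmz3 : (3 : ℤ) ≤ (m : ℤ) := by exact_mod_cast hm3
  have h20 : (2 : ZMod m) ≠ 0 := by
    intro h
    have h2 : ((2 : ℕ) : ZMod m) = 0 := by exact_mod_cast h
    rw [ZMod.natCast_eq_zero_iff] at h2
    have := Nat.le_of_dvd (by norm_num) h2
    omega
  set d := orderOf (2 : ZMod m) with hd
  -- d > 0
  have hd0 : 0 < d := by
    obtain ⟨u, hu⟩ := h20.isUnit
    have h1 : orderOf (u : ZMod m) = orderOf u := orderOf_units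
    rw [hu] at h1
    rw [hd, h1]
    exact orderOf_pos u
  -- basic facts
  have hmemIcc : ∀ j ∈ Set.Icc (0 : ℤ) ((m : ℤ) - 2), ∀ p : ℕ,
      (gammaMap (m : ℤ))^[p] j ∈ Set.Icc (0 : ℤ) ((m : ℤ) - 2) := by
    intro j hj p
    induction p with
    | zero => simpa using hj
    | succ n ih =>
      rw [Function.iterate_succ_apply']
      exact gamma_mem hmz hmz3 ih
  -- semiconjugacy
  have hsemi : ∀ j : ℤ, (2 : ZMod m) * (((gammaMap (m : ℤ) j : ℤ) : ZMod m) + 1)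
      = ((j : ℤ) : ZMod m) + 1 := by
    intro j
    have h := gamma_two_mul hmz j
    have h2 : ((2 * gammaMap (m : ℤ) j : ℤ) : ZMod m)
        = ((if Even j then (m : ℤ) - 1 + j else j - 1 : ℤ) : ZMod m) := by rw [h]
    split_ifs at h2 <;> push_cast [ZMod.natCast_self] at h2 <;> linear_combination h2
  have hpow : ∀ (p : ℕ) (j : ℤ), (2 : ZMod m) ^ p * ((((gammaMap (m : ℤ))^[p] j : ℤ) : ZMod m) + 1)
      = ((j : ℤ) : ZMod m) + 1 := by
    intro p j
    induction p with
    | zero => simp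
    | succ n ih =>
      rw [Function.iterate_succ_apply', pow_succ]
      calc (2 : ZMod m) ^ n * 2 * ((((gammaMap (m:ℤ)) ((gammaMap (m : ℤ))^[n] j) : ℤ) : ZMod m) + 1)
          = (2 : ZMod m) ^ n * ((2 : ZMod m) * (((gammaMap (m:ℤ) ((gammaMap (m : ℤ))^[n] j) : ℤ) : ZMod m) + 1)) := by ring
        _ = (2 : ZMod m) ^ n * ((((gammaMap (m : ℤ))^[n] j : ℤ) : ZMod m) + 1) := by rw [hsemi]
        _ = ((j : ℤ) : ZMod m) + 1 := ih
  -- cast injectivity on the interval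
  have hinj : ∀ a ∈ Set.Icc (0 : ℤ) ((m : ℤ) - 2), ∀ b ∈ Set.Icc (0 : ℤ) ((m : ℤ) - 2),
      ((a : ℤ) : ZMod m) = b → a = b := by
    intro a ha b hb hab
    rw [ZMod.intCast_eq_intCast_iff] at hab
    have hdvd : (m : ℤ) ∣ b - a := hab.dvd
    have := Int.eq_zero_of_abs_lt_dvd hdvd (by simp only [Set.mem_Icc] at ha hb; rw [abs_lt]; omega)
    omega
  -- nonvanishing
  have hnz : ∀ a ∈ Set.Icc (0 : ℤ) ((m : ℤ) - 2), ((a : ZMod m) + 1) ≠ 0 := by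
    intro a ha h
    have h1 : ((a + 1 : ℤ) : ZMod m) = 0 := by push_cast; linear_combination h
    rw [ZMod.intCast_zmod_eq_zero_iff_dvd] at h1
    simp only [Set.mem_Icc] at ha
    have := Int.le_of_dvd (by omega) h1
    omega
  have h2d : (2 : ZMod m) ^ d = 1 := pow_orderOf_eq_one _
  -- γ^[d] fixes every point of the interval
  have hfix : ∀ j ∈ Set.Icc (0 : ℤ) ((m : ℤ) - 2), (gammaMap (m : ℤ))^[d] j = j := by
    intro j hj
    have h1 := hpow d j
    rw [h2d, one_mul] at h1
    have h2 : (((gammaMap (m : ℤ))^[d] j : ℤ) : ZMod m) = ((j : ℤ) : ZMod m) := by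
      linear_combination h1
    exact hinj _ (hmemIcc j hj d) _ hj h2
  -- reduction of exponents mod d
  have hmod : ∀ j ∈ Set.Icc (0 : ℤ) ((m : ℤ) - 2), ∀ p : ℕ,
      (gammaMap (m : ℤ))^[p] j = (gammaMap (m : ℤ))^[p % d] j := by
    intro j hj p
    induction p using Nat.strong_induction_on with
    | _ p ih =>
      by_cases hp : p < d
      · rw [Nat.mod_eq_of_lt hp]
      · push_neg at hp
        have h1 : p = (p - d) + d := by omega
        rw [h1, Function.iterate_add_apply, hfix j hj, ih (p - d) (by omega),
          Nat.add_mod_right]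
  -- main counting statement
  have hcount : ∀ j ∈ Set.Icc (0 : ℤ) ((m : ℤ) - 2),
      ({x : ℤ | ∃ p : ℕ, (gammaMap (m : ℤ))^[p] j = x}).ncard = d := by
    intro j hj
    have hset : {x : ℤ | ∃ p : ℕ, (gammaMap (m : ℤ))^[p] j = x}
        = (fun p : ℕ => (gammaMap (m : ℤ))^[p] j) '' Set.Iio d := by
      ext x
      constructor
      · rintro ⟨p, rfl⟩
        exact ⟨p % d, Nat.mod_lt _ hd0, (hmod j hj p).symm⟩
      · rintro ⟨p, _, rfl⟩
        exact ⟨p, rfl⟩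
    have hio : Set.InjOn (fun p : ℕ => (gammaMap (m : ℤ))^[p] j) (Set.Iio d) := by
      intro a ha b hb hab
      simp only [Set.mem_Iio] at ha hb
      have h1 := hpow a j
      have h2 := hpow b j
      simp only at hab
      rw [hab] at h1
      rw [← h2] at h1
      have hy := hnz _ (hmemIcc j hj b)
      have h3 : (2 : ZMod m) ^ a = (2 : ZMod m) ^ b := mul_right_cancel₀ hy h1
      exact pow_injOn_Iio_orderOf (Set.mem_Iio.mpr ha) (Set.mem_Iio.mpr hb) h3
    rw [hset, Set.ncard_image_of_injOn hio, ← Finset.coe_range, Set.ncard_coe_finset,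
      Finset.card_range]
  refine ⟨hcount, ?_, ?_⟩
  · intro h
    have h0 : (0 : ℤ) ∈ Set.Icc (0 : ℤ) ((m : ℤ) - 2) := by simp only [Set.mem_Icc]; omega
    have h1 := hcount 0 h0
    rw [h 0 h0] at h1
    have h2 : (Set.Icc (0 : ℤ) ((m : ℤ) - 2)).ncard = m - 1 := by
      rw [← Finset.coe_Icc, Set.ncard_coe_finset, Int.card_Icc]
      omega
    omega
  · intro h j hj
    have hsub : {x : ℤ | ∃ p : ℕ, (gammaMap (m : ℤ))^[p] j = x} ⊆ Set.Icc (0 : ℤ) ((m : ℤ) - 2) := by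
      rintro x ⟨p, rfl⟩
      exact hmemIcc j hj p
    have h2 : (Set.Icc (0 : ℤ) ((m : ℤ) - 2)).ncard = m - 1 := by
      rw [← Finset.coe_Icc, Set.ncard_coe_finset, Int.card_Icc]
      omega
    exact Set.eq_of_subset_of_ncard_le hsub (by rw [hcount j hj, h2, h])
      (Set.finite_Icc _ _)
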